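/- Let N ≥ 3, φ ∈ ℝ^N, and l ∈ ℤ, and set c := (Φ + 2πl)/N. Define θ by θ_N = 0 and θ_j = Σ_{k=j}^{N−1} (φ_k − c) for j = 1,…,N−1. Then s_k ≡ c (mod 2π) for all k = 1,…,N (in particular s_1 = … = s_{N−1} = c and s_N = c − 2πl), θ is a stationary point of F_φ, F_φ(θ) = N(1 − cos c), and det 𝓗(θ) = N (cos c)^{N−1}. -/

import Mathlib

open Real Filter

/-- The variable `s k = φ k + θ (k+1) - θ k` (indices cyclic mod `N`,
0-based; paper index `k` corresponds to `k-1` here, so `s_N` is `sVar` at `lastIdx`). -/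
noncomputable def sVar (N : ℕ) (hN : 0 < N) (φ θ : Fin N → ℝ) (k : Fin N) : ℝ :=
  φ k + θ ⟨((k : ℕ) + 1) % N, Nat.mod_lt _ hN⟩ - θ k

/-- The lattice Landau gauge functional / random phase XY Hamiltonian
`F_φ(θ) = Σ_k (1 - cos(φ_k + θ_{k+1} - θ_k))` with periodic boundary conditions. -/
noncomputable def Fxy (N : ℕ) (hN : 0 < N) (φ θ : Fin N → ℝ) : ℝ :=
  ∑ k : Fin N, (1 - Real.cos (sVar N hN φ θ k))

/-- The index of the fixed site (paper site `N`). -/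
def lastIdx (N : ℕ) (hN : 0 < N) : Fin N :=
  ⟨N - 1, Nat.sub_lt hN Nat.one_pos⟩

/-- `θ` is a stationary point of `F_φ` regarded as a function of the free
coordinates `θ_1, …, θ_{N-1}` (0-based: coordinates `k` with `k < N-1`),
with `θ` at `lastIdx` held fixed: all partial derivatives vanish. -/
noncomputable def IsStationaryPt (N : ℕ) (hN : 0 < N) (φ θ : Fin N → ℝ) : Prop :=
  ∀ k : Fin N, (k : ℕ) < N - 1 →
    deriv (fun t : ℝ => Fxy N hN φ (Function.update θ k t)) (θ k) = 0

/-- The `(N-1) × (N-1)` tridiagonal matrix with entries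
`δ_{ij}(c_{i-1} + c_i) - δ_{i-1,j} c_{i-1} - δ_{i+1,j} c_i`, where indices are
0-based (paper index `i` ↦ `i-1`) and `c_0 := c_N` (cyclic predecessor). -/
noncomputable def hessC (N : ℕ) (hN : 0 < N) (c : Fin N → ℝ) :
    Matrix (Fin (N - 1)) (Fin (N - 1)) ℝ :=
  Matrix.of fun i j =>
    (if i = j then
        c ⟨((i : ℕ) + (N - 1)) % N, Nat.mod_lt _ hN⟩ +
          c ⟨(i : ℕ), lt_of_lt_of_le i.isLt (Nat.sub_le N 1)⟩
      else 0)
    - (if (i : ℕ) = (j : ℕ) + 1 then c ⟨((i : ℕ) + (N - 1)) % N, Nat.mod_lt _ hN⟩ else 0)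
    - (if (j : ℕ) = (i : ℕ) + 1 then c ⟨(i : ℕ), lt_of_lt_of_le i.isLt (Nat.sub_le N 1)⟩ else 0)

/-- The Hessian of `F_φ` (with the last coordinate fixed) at a configuration `θ`. -/
noncomputable def hessAt (N : ℕ) (hN : 0 < N) (φ θ : Fin N → ℝ) :
    Matrix (Fin (N - 1)) (Fin (N - 1)) ℝ :=
  hessC N hN fun k => Real.cos (sVar N hN φ θ k)

/-- `F_φ` as a function of the free coordinates only: the coordinate at
`lastIdx` is overwritten by `0`. -/
noncomputable def FxyFixed (N : ℕ) (hN : 0 < N) (φ : Fin N → ℝ) (η : Fin N → ℝ) : ℝ :=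
  Fxy N hN φ (Function.update η (lastIdx N hN) 0)

/-- The value `σ = (Φ + 2πl - π Σ_{k=1}^{N-1} q_k) / (1 + Σ_{k=1}^{N-1} (-1)^{q_k})`. -/
noncomputable def sigmaVal (N : ℕ) (hN : 0 < N) (φ : Fin N → ℝ) (q : Fin N → ℕ) (l : ℤ) : ℝ :=
  ((∑ k, φ k) + 2 * Real.pi * (l : ℝ)
      - Real.pi * ∑ k ∈ Finset.univ.erase (lastIdx N hN), (q k : ℝ)) /
    (1 + ∑ k ∈ Finset.univ.erase (lastIdx N hN), (-1 : ℝ) ^ (q k))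

/-!
On the symmetric configuration the first `N - 1` variables `s_k` equal `c` by telescoping the
definition of `θ`, and since `Σ s_k = Φ` for every configuration, the last one is
`Φ - (N - 1) c = c - 2πl`. Hence all `cos s_k`, and all `sin s_k`, coincide. The partial derivative
of `F_φ` in `θ_k` is `sin s_{k-1} - sin s_k`, so it vanishes, `F_φ = N (1 - cos c)`, and the Hessian
is `cos c` times `tridiag(-1, 2, -1)` of size `N - 1`, whose determinant `N` follows from the
three-term recurrence `D_{n+2} = 2 D_{n+1} - D_n`.
-/

namespace Matrix

variable {R : Type*}

def tridiagToeplitz [Zero R] (d e : R) (n : ℕ) : Matrix (Fin n) (Fin n) R :=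
  of fun i j => if (i : ℕ) = j then d else if (i : ℕ) = j + 1 ∨ (j : ℕ) = i + 1 then e else 0

theorem tridiagToeplitz_submatrix [Zero R] (d e : R) {m n : ℕ} (k : ℕ)
    (f g : Fin m → Fin n) (hf : ∀ i, (f i : ℕ) = i + k) (hg : ∀ j, (g j : ℕ) = j + k) :
    (tridiagToeplitz d e n).submatrix f g = tridiagToeplitz d e m := by
  ext i j
  simp only [submatrix_apply, tridiagToeplitz, of_apply, hf, hg]
  split_ifs <;> first | rfl | omega

variable [CommRing R]

theorem det_tridiagToeplitz_succ_succ (d e : R) (n : ℕ) :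
    (tridiagToeplitz d e (n + 2)).det =
      d * (tridiagToeplitz d e (n + 1)).det - e ^ 2 * (tridiagToeplitz d e n).det := by
  have hminor₀ : (tridiagToeplitz d e (n + 2)).submatrix Fin.succ (Fin.succAbove 0) =
      tridiagToeplitz d e (n + 1) :=
    tridiagToeplitz_submatrix d e 1 _ _ (fun _ => rfl) (fun _ => rfl)
  have hminor₁ : ((tridiagToeplitz d e (n + 2)).submatrix Fin.succ
      (Fin.succAbove (Fin.succ 0))).det = e * (tridiagToeplitz d e n).det := by
    rw [det_succ_column_zero, Fin.sum_univ_succ, Finset.sum_eq_zero, add_zero,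
      submatrix_submatrix, tridiagToeplitz_submatrix d e 2 (Fin.succ ∘ Fin.succAbove 0)
        ((Fin.succ 0).succAbove ∘ Fin.succ) (fun _ => by simp) (fun _ => by simp)]
    · simp [tridiagToeplitz]
    · intro i _
      simp [tridiagToeplitz]
  rw [det_succ_row_zero, Fin.sum_univ_succ, Fin.sum_univ_succ, Finset.sum_eq_zero, hminor₀,
    hminor₁]
  · simp [tridiagToeplitz, sq, sub_eq_add_neg, mul_assoc]
  · intro j _
    simp [tridiagToeplitz]

theorem det_tridiagToeplitz_two_mul_neg (a : R) (n : ℕ) :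
    (tridiagToeplitz (2 * a) (-a) n).det = (n + 1) * a ^ n := by
  induction n using Nat.twoStepInduction with
  | zero => simp
  | one => simp [tridiagToeplitz, one_add_one_eq_two]
  | more n ih₀ ih₁ =>
    rw [det_tridiagToeplitz_succ_succ, ih₀, ih₁]
    push_cast
    ring

end Matrix

theorem sVar_eq (N : ℕ) [NeZero N] (hN : 0 < N) (φ θ : Fin N → ℝ) (k : Fin N) :
    sVar N hN φ θ k = φ k + θ (k + 1) - θ k := by
  have hsucc : (⟨((k : ℕ) + 1) % N, Nat.mod_lt _ hN⟩ : Fin N) = k + 1 :=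
    Fin.ext (by simp [Fin.val_add])
  rw [sVar, hsucc]

theorem sum_sVar (N : ℕ) [NeZero N] (hN : 0 < N) (φ θ : Fin N → ℝ) :
    ∑ k, sVar N hN φ θ k = ∑ k, φ k := by
  simp only [sVar_eq, Finset.sum_sub_distrib, Finset.sum_add_distrib,
    Fintype.sum_equiv (Equiv.addRight 1) (fun k => θ (k + 1)) θ fun _ => rfl,
    add_sub_cancel_right]

theorem hasDerivAt_Fxy_update (N : ℕ) [NeZero N] (hN : 0 < N) (φ θ : Fin N → ℝ) (k : Fin N) :
    HasDerivAt (fun t => Fxy N hN φ (Function.update θ k t))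
      (Real.sin (sVar N hN φ θ (k - 1)) - Real.sin (sVar N hN φ θ k)) (θ k) := by
  set δ : Fin N → ℝ := Pi.single k 1
  have hupd : ∀ j, HasDerivAt (fun t => Function.update θ k t j) (δ j) (θ k) :=
    hasDerivAt_pi.1 (hasDerivAt_update θ k (θ k))
  have hterm : ∀ j, HasDerivAt (fun t => 1 - Real.cos (sVar N hN φ (Function.update θ k t) j))
      (Real.sin (sVar N hN φ θ j) * (δ (j + 1) - δ j)) (θ k) := by
    intro j
    simp only [sVar_eq]
    simpa using (((hupd (j + 1)).const_add (φ j)).sub (hupd j)).cos.const_sub 1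
  have hshift : ∑ j, Real.sin (sVar N hN φ θ j) * δ (j + 1) =
      ∑ j, Real.sin (sVar N hN φ θ (j - 1)) * δ j :=
    Fintype.sum_equiv (Equiv.addRight 1) _ _ fun j => by simp
  refine (HasDerivAt.fun_sum (u := Finset.univ) fun j _ => hterm j).congr_deriv ?_
  simp only [mul_sub, Finset.sum_sub_distrib, hshift]
  simp [δ, Pi.single_apply]

theorem isStationaryPt_of_sin_sVar_eq (N : ℕ) [NeZero N] (hN : 0 < N) (φ θ : Fin N → ℝ) (b : ℝ)
    (h : ∀ k, Real.sin (sVar N hN φ θ k) = b) : IsStationaryPt N hN φ θ := fun k _ => by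
  rw [(hasDerivAt_Fxy_update N hN φ θ k).deriv, h, h, sub_self]

theorem Fxy_eq_of_cos_sVar_eq (N : ℕ) (hN : 0 < N) (φ θ : Fin N → ℝ) (a : ℝ)
    (h : ∀ k, Real.cos (sVar N hN φ θ k) = a) : Fxy N hN φ θ = N * (1 - a) := by
  simp [Fxy, h, mul_sub]

theorem hessC_const (N : ℕ) (hN : 0 < N) (a : ℝ) :
    hessC N hN (fun _ => a) = Matrix.tridiagToeplitz (2 * a) (-a) (N - 1) := by
  ext i j
  simp only [hessC, Matrix.tridiagToeplitz, Matrix.of_apply, Fin.ext_iff]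
  split_ifs <;> first | ring1 | (exfalso; omega)

theorem det_hessAt_eq_of_cos_sVar_eq (N : ℕ) (hN : 0 < N) (φ θ : Fin N → ℝ) (a : ℝ)
    (h : ∀ k, Real.cos (sVar N hN φ θ k) = a) : (hessAt N hN φ θ).det = N * a ^ (N - 1) := by
  rw [hessAt, funext h, hessC_const, Matrix.det_tridiagToeplitz_two_mul_neg,
    Nat.cast_pred hN, sub_add_cancel]

def symConfig (N : ℕ) (φ : Fin N → ℝ) (c : ℝ) : Fin N → ℝ := fun j =>
  ∑ k ∈ Finset.univ.filter (fun k : Fin N => (j : ℕ) ≤ (k : ℕ) ∧ (k : ℕ) < N - 1), (φ k - c)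

section symConfig

variable (N : ℕ) (hN : 0 < N) (φ : Fin N → ℝ) (c : ℝ)

theorem symConfig_lastIdx : symConfig N φ c (lastIdx N hN) = 0 := by
  rw [symConfig, Finset.filter_false_of_mem fun k _ => by simp only [lastIdx]; omega,
    Finset.sum_empty]

theorem symConfig_eq_add_symConfig_succ [NeZero N] {j : Fin N} (hj : (j : ℕ) < N - 1) :
    symConfig N φ c j = (φ j - c) + symConfig N φ c (j + 1) := by
  have hsucc : ((j + 1 : Fin N) : ℕ) = j + 1 := Fin.val_add_one_of_lt' (by omega)
  have hfilter : Finset.univ.filter (fun k : Fin N => (j : ℕ) ≤ k ∧ (k : ℕ) < N - 1) =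
      insert j (Finset.univ.filter fun k : Fin N => (j : ℕ) + 1 ≤ k ∧ (k : ℕ) < N - 1) := by
    ext k
    simp only [Finset.mem_filter, Finset.mem_univ, true_and, Finset.mem_insert, Fin.ext_iff]
    omega
  rw [symConfig, symConfig, hsucc, hfilter, Finset.sum_insert (by simp)]

theorem sVar_symConfig_of_lt [NeZero N] {k : Fin N} (hk : (k : ℕ) < N - 1) :
    sVar N hN φ (symConfig N φ c) k = c := by
  rw [sVar_eq, symConfig_eq_add_symConfig_succ N φ c hk]
  ring

theorem sVar_symConfig_lastIdx [NeZero N] :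
    sVar N hN φ (symConfig N φ c) (lastIdx N hN) = ∑ k, φ k - (N - 1) * c := by
  have hothers : ∑ k ∈ Finset.univ.erase (lastIdx N hN), sVar N hN φ (symConfig N φ c) k =
      (N - 1) * c := by
    rw [Finset.sum_congr rfl fun k hk => sVar_symConfig_of_lt N hN φ c ?_]
    · simp [Finset.card_erase_of_mem, Nat.cast_pred hN]
    · have := k.isLt
      simp only [Finset.mem_erase, ne_eq, Fin.ext_iff, lastIdx] at hk
      omega
  rw [← sum_sVar N hN φ (symConfig N φ c), ← Finset.add_sum_erase _ _ (Finset.mem_univ _),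
    hothers, add_sub_cancel_right]

end symConfig

/-- the symmetric configurations. For `c = (Φ + 2πl)/N` and `θ`
given by `θ_N = 0`, `θ_j = Σ_{k=j}^{N-1} (φ_k - c)`, one has `s_k ≡ c (mod 2π)`
for all `k` (indeed `s_1 = … = s_{N-1} = c` and `s_N = c - 2πl`), `θ` is a
stationary point of `F_φ`, `F_φ(θ) = N(1 - cos c)`, and
`det 𝓗(θ) = N (cos c)^{N-1}`. -/
theorem stmt12 (N : ℕ) (hN : 3 ≤ N) (φ : Fin N → ℝ) (l : ℤ) :
    let c : ℝ := ((∑ k, φ k) + 2 * π * (l : ℝ)) / N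
    let θ : Fin N → ℝ := fun j =>
      ∑ k ∈ Finset.univ.filter (fun k : Fin N => (j : ℕ) ≤ (k : ℕ) ∧ (k : ℕ) < N - 1),
        (φ k - c)
    θ (lastIdx N (by omega)) = 0 ∧
    (∀ k : Fin N, ∃ m : ℤ, sVar N (by omega) φ θ k = c + 2 * π * m) ∧
    (∀ k : Fin N, (k : ℕ) < N - 1 → sVar N (by omega) φ θ k = c) ∧
    sVar N (by omega) φ θ (lastIdx N (by omega)) = c - 2 * π * l ∧
    IsStationaryPt N (by omega) φ θ ∧
    Fxy N (by omega) φ θ = N * (1 - Real.cos c) ∧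
    (hessAt N (by omega) φ θ).det = N * (Real.cos c) ^ (N - 1) := by
  intro c θ
  have hN₀ : 0 < N := by omega
  have : NeZero N := ⟨hN₀.ne'⟩
  have hsum : ∑ k, φ k = N * c - 2 * π * l := by
    simp only [c]
    field_simp
    ring
  have hlast : sVar N hN₀ φ θ (lastIdx N hN₀) = c - 2 * π * l :=
    (sVar_symConfig_lastIdx N hN₀ φ c).trans (by rw [hsum]; ring)
  have hmod : ∀ k, ∃ m : ℤ, sVar N hN₀ φ θ k = c + 2 * π * m := by
    intro k
    by_cases hk : (k : ℕ) < N - 1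
    · exact ⟨0, by rw [Int.cast_zero, mul_zero, add_zero]; exact sVar_symConfig_of_lt N hN₀ φ c hk⟩
    · obtain rfl : k = lastIdx N hN₀ := Fin.ext (by simp only [lastIdx]; omega)
      exact ⟨-l, by rw [hlast]; push_cast; ring⟩
  have htrig : ∀ k, Real.cos (sVar N hN₀ φ θ k) = Real.cos c ∧
      Real.sin (sVar N hN₀ φ θ k) = Real.sin c := by
    intro k
    obtain ⟨m, hm⟩ := hmod k
    rw [hm, mul_comm, cos_add_int_mul_two_pi, sin_add_int_mul_two_pi]
    exact ⟨rfl, rfl⟩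
  exact ⟨symConfig_lastIdx N hN₀ φ c, hmod, fun k hk => sVar_symConfig_of_lt N hN₀ φ c hk, hlast,
    isStationaryPt_of_sin_sVar_eq N hN₀ φ θ _ fun k => (htrig k).2,
    Fxy_eq_of_cos_sVar_eq N hN₀ φ θ _ fun k => (htrig k).1,
    det_hessAt_eq_of_cos_sVar_eq N hN₀ φ θ _ fun k => (htrig k).1⟩
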